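/- arXiv:2601.18608 — 6 statements merged into one kernel-verified Lean document; each statement's English description precedes it below -/
import Mathlib

section
/- Let d ≥ 2, let ν : 2^D → ℝ be a cooperative game on D = {1,…,d} with ν(∅) = 0, and let I be an interaction frontier. Suppose the vector φ^I ∈ ℝ^{D∪I} minimizes the PolySHAP objective Σ_{S ⊆ D} μ(S)·(ν(S) − Σ_{T ∈ D∪I, T ⊆ S} φ_T)² subject to the efficiency constraint Σ_{T ∈ D∪I} φ_T = ν(D). Then for every player i ∈ D, the Shapley value is recovered as φ_i^SV[ν] = φ^I_{{i}} + Σ_{S ∈ I : i ∈ S} φ^I_S / |S|. -/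
/-!
Let `ν̂(S) = ∑_{T ∈ D ∪ I, T ⊆ S} φ_T` be the game fitted by `φ` and `r = ν - ν̂` its residual.
The constraint, `ν(∅) = 0` and `∅ ∉ D ∪ I` give `r(D) = r(∅) = 0`, and first-order optimality
of `φ` in the feasible direction `e_{i} - e_{j}` says that `∑_{S ∋ i} μ(S) r(S)` does not depend
on `i`. The Shapley coefficients of two players on a coalition `S` differ by
`μ(S) (1_{i ∈ S} - 1_{j ∈ S}) / (d - 1)`, so all players get the same Shapley value in `r`,
which by efficiency is `0`. Hence `ν` and `ν̂` have the same Shapley values, and `ν̂` is the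
combination `∑_T φ_T u_T` of unanimity games, in which each member of `T` gets `1 / |T|`.
-/

open Finset

/-- Shapley value of player `i` in the game `ν` on `D = Fin d`. -/
noncomputable def shapley (d : ℕ) (ν : Finset (Fin d) → ℝ) (i : Fin d) : ℝ :=
  (1 / (d : ℝ)) * ∑ S ∈ ((Finset.univ : Finset (Fin d)).erase i).powerset,
    (ν (insert i S) - ν S) / ((d - 1).choose S.card : ℝ)

/-- Shapley kernel weights `μ(S)`. -/
noncomputable def shapleyWeight (d : ℕ) (S : Finset (Fin d)) : ℝ :=
  if 0 < S.card ∧ S.card < d then 1 / ((d - 2).choose (S.card - 1) : ℝ) else 0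

theorem sub_div_mul_choose {n k : ℕ} (hk : k ≤ n) :
    ((n : ℝ) + 1 - k) / ((n + 1) * n.choose k) = ((n + 1).choose k : ℝ)⁻¹ := by
  have h : (n.choose k : ℝ) * (n + 1) = (n + 1).choose k * (n + 1 - k) := by
    have := congrArg (Nat.cast : ℕ → ℝ) (Nat.choose_mul_succ_eq n k)
    push_cast [Nat.cast_sub (by omega : k ≤ n + 1)] at this
    exact this
  have : (n.choose k : ℝ) ≠ 0 := by exact_mod_cast (Nat.choose_pos hk).ne'
  have : ((n + 1).choose k : ℝ) ≠ 0 := by exact_mod_cast (Nat.choose_pos (by omega)).ne'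
  field_simp
  linear_combination -h

theorem add_one_div_mul_choose {n k : ℕ} (hk : k ≤ n) :
    ((k : ℝ) + 1) / ((n + 1) * n.choose k) = ((n + 1).choose (k + 1) : ℝ)⁻¹ := by
  have h : ((n : ℝ) + 1) * n.choose k = (n + 1).choose (k + 1) * (k + 1) := by
    exact_mod_cast Nat.add_one_mul_choose_eq n k
  have : (n.choose k : ℝ) ≠ 0 := by exact_mod_cast (Nat.choose_pos hk).ne'
  have : ((n + 1).choose (k + 1) : ℝ) ≠ 0 := by exact_mod_cast (Nat.choose_pos (by omega)).ne'
  field_simp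
  linear_combination -h

theorem inv_mul_choose_add_inv_mul_choose {m k : ℕ} (hk : k ≤ m) :
    ((m + 2) * (m + 1).choose k : ℝ)⁻¹ + ((m + 2) * (m + 1).choose (k + 1) : ℝ)⁻¹
      = (m.choose k : ℝ)⁻¹ / (m + 1) := by
  have e1 : ((m : ℝ) + 1) * m.choose k = (m + 1).choose (k + 1) * (k + 1) := by
    exact_mod_cast Nat.add_one_mul_choose_eq m k
  have e2 : ((m + 1).choose (k + 1) : ℝ) * (k + 1) = (m + 1).choose k * (m + 1 - k) := by
    have := congrArg (Nat.cast : ℕ → ℝ) (Nat.choose_succ_right_eq (m + 1) k)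
    push_cast [Nat.cast_sub (by omega : k ≤ m + 1)] at this
    exact this
  have : (m.choose k : ℝ) ≠ 0 := by exact_mod_cast (Nat.choose_pos hk).ne'
  have : ((m + 1).choose k : ℝ) ≠ 0 := by exact_mod_cast (Nat.choose_pos (by omega)).ne'
  have : ((m + 1).choose (k + 1) : ℝ) ≠ 0 := by exact_mod_cast (Nat.choose_pos (by omega)).ne'
  field_simp
  linear_combination
    ((m + 1).choose k + (m + 1).choose (k + 1) : ℝ) * e1 + ((m + 1).choose (k + 1) : ℝ) * e2

theorem sum_mul_residual_mul_eq_zero_of_forall_le {σ : Type*} [Fintype σ] (w y u v : σ → ℝ)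
    (h : ∀ t : ℝ, ∑ x, w x * (y x - u x) ^ 2 ≤ ∑ x, w x * (y x - (u x + t * v x)) ^ 2) :
    ∑ x, w x * (y x - u x) * v x = 0 := by
  set P := ∑ x, w x * (y x - u x) * v x
  set Q := ∑ x, w x * v x ^ 2
  have hexpand : ∀ t : ℝ, ∑ x, w x * (y x - (u x + t * v x)) ^ 2
      = ∑ x, w x * (y x - u x) ^ 2 + (Q * (t * t) + -2 * P * t) := by
    intro t
    simp only [P, Q, mul_sum, sum_mul, ← sum_add_distrib]
    exact sum_congr rfl fun x _ => by ring
  have hdiscrim := discrim_le_zero (a := Q) (b := -2 * P) (c := 0) fun t => by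
    linarith [h t, hexpand t]
  rw [discrim] at hdiscrim
  nlinarith [sq_nonneg P]

theorem eq_sum_div_card_of_forall_eq {ι : Type*} [Fintype ι] {f : ι → ℝ} {T : Finset ι} {i : ι}
    (hi : i ∈ T) (hconst : ∀ j ∈ T, f j = f i) (hzero : ∀ j ∉ T, f j = 0) :
    f i = (∑ j, f j) / #T := by
  have hT : (#T : ℝ) ≠ 0 := by exact_mod_cast (card_pos.2 ⟨i, hi⟩).ne'
  rw [← sum_subset (subset_univ T) fun j _ hj => hzero j hj, sum_congr rfl hconst, sum_const,
    nsmul_eq_mul, mul_div_cancel_left₀ _ hT]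

def unanimityGame {d : ℕ} (T S : Finset (Fin d)) : ℝ :=
  if T ⊆ S then 1 else 0

noncomputable def shapleyCoeff (d : ℕ) (i : Fin d) (S : Finset (Fin d)) : ℝ :=
  if i ∈ S then ((d : ℝ) * (d - 1).choose (#S - 1))⁻¹ else -((d : ℝ) * (d - 1).choose #S)⁻¹

section Shapley

variable {d : ℕ}

theorem shapley_eq_sum_shapleyCoeff (ν : Finset (Fin d) → ℝ) (i : Fin d) :
    shapley d ν i = ∑ S, shapleyCoeff d i S * ν S := by
  have hi : i ∉ univ.erase i := notMem_erase i univ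
  rw [← powerset_univ, ← insert_erase (mem_univ i), sum_powerset_insert hi, shapley, mul_sum,
    ← sum_add_distrib]
  refine sum_congr rfl fun S hS => ?_
  have hiS : i ∉ S := fun h => hi (mem_powerset.1 hS h)
  simp only [shapleyCoeff, hiS, mem_insert_self, card_insert_of_notMem hiS, if_true, if_false,
    Nat.add_sub_cancel]
  ring

theorem shapley_sub (ν ν' : Finset (Fin d) → ℝ) (i : Fin d) :
    shapley d (ν - ν') i = shapley d ν i - shapley d ν' i := by
  simp only [shapley_eq_sum_shapleyCoeff, Pi.sub_apply, mul_sub, sum_sub_distrib]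

theorem shapley_sum_mul {ι : Type*} (A : Finset ι) (c : ι → ℝ) (f : ι → Finset (Fin d) → ℝ)
    (i : Fin d) :
    shapley d (fun S => ∑ T ∈ A, c T * f T S) i = ∑ T ∈ A, c T * shapley d (f T) i := by
  simp only [shapley_eq_sum_shapleyCoeff, mul_sum]
  rw [sum_comm]
  exact sum_congr rfl fun T _ => sum_congr rfl fun S _ => by ring

theorem sum_shapleyCoeff_mem (S : Finset (Fin d)) :
    ∑ i ∈ S, shapleyCoeff d i S = if S = ∅ then 0 else (d.choose #S : ℝ)⁻¹ := by
  rcases S.eq_empty_or_nonempty with rfl | hS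
  · simp
  rw [if_neg hS.ne_empty, sum_congr rfl fun i hi => show shapleyCoeff d i S = _ from if_pos hi,
    sum_const, nsmul_eq_mul]
  obtain ⟨k, hk⟩ : ∃ k, #S = k + 1 := Nat.exists_eq_succ_of_ne_zero (card_ne_zero.2 hS)
  have hle : #S ≤ d := by simpa using card_le_univ S
  obtain ⟨n, rfl⟩ : ∃ n, d = n + 1 := ⟨d - 1, by omega⟩
  rw [hk, ← add_one_div_mul_choose (by omega : k ≤ n)]
  push_cast
  ring

theorem sum_shapleyCoeff_compl (S : Finset (Fin d)) :
    ∑ i ∈ Sᶜ, shapleyCoeff d i S = if S = univ then 0 else -(d.choose #S : ℝ)⁻¹ := by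
  by_cases hS : S = univ
  · simp [hS]
  rw [if_neg hS, sum_congr rfl fun i hi =>
    show shapleyCoeff d i S = _ from if_neg (mem_compl.1 hi), sum_const, card_compl,
    Fintype.card_fin, nsmul_eq_mul]
  have hlt : #S < d := by simpa using card_lt_card (ssubset_univ_iff.2 hS)
  obtain ⟨n, rfl⟩ : ∃ n, d = n + 1 := ⟨d - 1, by omega⟩
  rw [← sub_div_mul_choose (by omega : #S ≤ n)]
  push_cast [Nat.cast_sub hlt.le]
  ring

theorem sum_shapley (ν : Finset (Fin d) → ℝ) : ∑ i, shapley d ν i = ν univ - ν ∅ := by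
  have hcoeff : ∀ S : Finset (Fin d), ∑ i, shapleyCoeff d i S
      = (d.choose #S : ℝ)⁻¹ * ((if S = univ then 1 else 0) - (if S = ∅ then 1 else 0)) := by
    intro S
    rw [← sum_add_sum_compl S, sum_shapleyCoeff_mem, sum_shapleyCoeff_compl]
    split_ifs <;> ring
  calc ∑ i, shapley d ν i = ∑ S, (∑ i, shapleyCoeff d i S) * ν S := by
        simp only [shapley_eq_sum_shapleyCoeff, sum_mul]
        exact sum_comm
    _ = ν univ - ν ∅ := by simp [hcoeff, mul_sub, sub_mul, sum_sub_distrib]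

theorem shapleyCoeff_sub_of_mem_of_notMem {S : Finset (Fin d)} {k l : Fin d} (hk : k ∈ S)
    (hl : l ∉ S) : shapleyCoeff d k S - shapleyCoeff d l S = shapleyWeight d S / (d - 1) := by
  have hlt : #S < d := by simpa using card_lt_univ_of_notMem hl
  obtain ⟨s, hs⟩ : ∃ s, #S = s + 1 := Nat.exists_eq_succ_of_ne_zero (card_ne_zero.2 ⟨k, hk⟩)
  obtain ⟨m, rfl⟩ : ∃ m, d = m + 2 := ⟨d - 2, by omega⟩
  rw [shapleyCoeff, shapleyCoeff, if_pos hk, if_neg hl, shapleyWeight, if_pos (by omega), hs,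
    sub_neg_eq_add]
  simp only [show m + 2 - 1 = m + 1 from rfl, Nat.add_sub_cancel]
  push_cast
  rw [inv_mul_choose_add_inv_mul_choose (by omega)]
  ring

theorem shapleyCoeff_sub_shapleyCoeff (i j : Fin d) (S : Finset (Fin d)) :
    shapleyCoeff d i S - shapleyCoeff d j S
      = shapleyWeight d S / (d - 1) * ((if i ∈ S then 1 else 0) - (if j ∈ S then 1 else 0)) := by
  by_cases hi : i ∈ S <;> by_cases hj : j ∈ S
  · simp [shapleyCoeff, hi, hj]
  · simp [hi, hj, shapleyCoeff_sub_of_mem_of_notMem hi hj]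
  · rw [← neg_sub, shapleyCoeff_sub_of_mem_of_notMem hj hi]
    simp [hi, hj]
  · simp [shapleyCoeff, hi, hj]

theorem shapley_sub_shapley (ν : Finset (Fin d) → ℝ) (i j : Fin d) :
    shapley d ν i - shapley d ν j
      = (∑ S, shapleyWeight d S * ν S * ((if i ∈ S then 1 else 0) - (if j ∈ S then 1 else 0)))
          / (d - 1) := by
  rw [shapley_eq_sum_shapleyCoeff, shapley_eq_sum_shapleyCoeff, ← sum_sub_distrib, sum_div]
  refine sum_congr rfl fun S _ => ?_
  rw [← sub_mul, shapleyCoeff_sub_shapleyCoeff]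
  ring

theorem shapley_eq_zero_of_orthogonal (r : Finset (Fin d) → ℝ) (hempty : r ∅ = 0)
    (huniv : r univ = 0)
    (horth : ∀ i j : Fin d,
      ∑ S, shapleyWeight d S * r S * ((if i ∈ S then 1 else 0) - (if j ∈ S then 1 else 0)) = 0)
    (i : Fin d) : shapley d r i = 0 := by
  rw [eq_sum_div_card_of_forall_eq (f := shapley d r) (mem_univ i) (fun j _ => ?_)
    (fun j hj => absurd (mem_univ j) hj), sum_shapley, hempty, huniv, sub_zero, zero_div]
  rw [← sub_eq_zero, shapley_sub_shapley, horth, zero_div]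

theorem shapley_unanimityGame_of_notMem {T : Finset (Fin d)} {i : Fin d} (hi : i ∉ T) :
    shapley d (unanimityGame T) i = 0 := by
  simp [shapley, unanimityGame, subset_insert_iff_of_notMem hi]

theorem shapley_unanimityGame {T : Finset (Fin d)} (hT : T.Nonempty) (i : Fin d) :
    shapley d (unanimityGame T) i = if i ∈ T then (#T : ℝ)⁻¹ else 0 := by
  split_ifs with hi
  · rw [eq_sum_div_card_of_forall_eq (f := shapley d (unanimityGame T)) hi (fun j hj => ?_)
      (fun j hj => shapley_unanimityGame_of_notMem hj), sum_shapley]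
    · simp [unanimityGame, hT.ne_empty]
    · rw [← sub_eq_zero, shapley_sub_shapley, sum_eq_zero, zero_div]
      intro S _
      by_cases hTS : T ⊆ S
      · simp [hTS hi, hTS hj]
      · simp [unanimityGame, hTS]
  · exact shapley_unanimityGame_of_notMem hi

end Shapley

def surrogateGame {d : ℕ} (idx : Finset (Finset (Fin d))) (φ : Finset (Fin d) → ℝ)
    (S : Finset (Fin d)) : ℝ :=
  ∑ T ∈ idx.filter (fun T => T ⊆ S), φ T

section SurrogateGame

variable {d : ℕ} (idx : Finset (Finset (Fin d)))

theorem surrogateGame_add_mul (φ δ : Finset (Fin d) → ℝ) (t : ℝ) (S : Finset (Fin d)) :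
    surrogateGame idx (fun T => φ T + t * δ T) S
      = surrogateGame idx φ S + t * surrogateGame idx δ S := by
  simp only [surrogateGame, sum_add_distrib, mul_sum]

theorem surrogateGame_sub (φ ψ : Finset (Fin d) → ℝ) :
    surrogateGame idx (φ - ψ) = surrogateGame idx φ - surrogateGame idx ψ := by
  funext S
  simp only [surrogateGame, Pi.sub_apply, sum_sub_distrib]

theorem surrogateGame_pi_single {i : Fin d} (hi : {i} ∈ idx) (S : Finset (Fin d)) :
    surrogateGame idx (Pi.single {i} 1) S = if i ∈ S then 1 else 0 := by
  simp [surrogateGame, sum_pi_single', hi]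

theorem surrogateGame_empty {φ : Finset (Fin d) → ℝ} (hne : ∀ T ∈ idx, T.Nonempty) :
    surrogateGame idx φ ∅ = 0 :=
  sum_eq_zero fun T hT =>
    absurd (subset_empty.1 (mem_filter.1 hT).2) (hne T (mem_filter.1 hT).1).ne_empty

theorem surrogateGame_univ (φ : Finset (Fin d) → ℝ) :
    surrogateGame idx φ univ = ∑ T ∈ idx, φ T := by
  simp [surrogateGame]

theorem surrogateGame_eq_sum_mul_unanimityGame (φ : Finset (Fin d) → ℝ) :
    surrogateGame idx φ = fun S => ∑ T ∈ idx, φ T * unanimityGame T S := by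
  funext S
  simp [surrogateGame, unanimityGame, sum_filter]

theorem shapley_surrogateGame (φ : Finset (Fin d) → ℝ) (hne : ∀ T ∈ idx, T.Nonempty)
    (i : Fin d) :
    shapley d (surrogateGame idx φ) i = ∑ T ∈ idx.filter (fun T => i ∈ T), φ T / #T := by
  rw [surrogateGame_eq_sum_mul_unanimityGame, shapley_sum_mul, sum_filter]
  refine sum_congr rfl fun T hT => ?_
  rw [shapley_unanimityGame (hne T hT), mul_ite, mul_zero, div_eq_mul_inv]

theorem sum_mul_residual_mul_surrogateGame_eq_zero (w ν : Finset (Fin d) → ℝ)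
    {φ δ : Finset (Fin d) → ℝ} {c : ℝ} (hφ : ∑ T ∈ idx, φ T = c)
    (hmin : ∀ ψ : Finset (Fin d) → ℝ, ∑ T ∈ idx, ψ T = c →
      ∑ S, w S * (ν S - surrogateGame idx φ S) ^ 2
        ≤ ∑ S, w S * (ν S - surrogateGame idx ψ S) ^ 2)
    (hδ : ∑ T ∈ idx, δ T = 0) :
    ∑ S, w S * (ν S - surrogateGame idx φ S) * surrogateGame idx δ S = 0 := by
  refine sum_mul_residual_mul_eq_zero_of_forall_le w ν _ _ fun t => ?_
  simpa only [surrogateGame_add_mul] using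
    hmin (fun T => φ T + t * δ T) (by rw [sum_add_distrib, ← mul_sum, hδ, mul_zero, add_zero, hφ])

end SurrogateGame

theorem sum_filter_mem_image_singleton_union_div_card {d : ℕ} {I : Finset (Finset (Fin d))}
    (hI : ∀ T ∈ I, 2 ≤ #T) (φ : Finset (Fin d) → ℝ) (i : Fin d) :
    ∑ T ∈ (univ.image (fun j => {j}) ∪ I).filter (fun T => i ∈ T), φ T / #T
      = φ {i} + ∑ S ∈ I.filter (fun S => i ∈ S), φ S / #S := by
  have hsingletons : (univ.image fun j : Fin d => ({j} : Finset (Fin d))).filter (fun T => i ∈ T)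
      = {{i}} := by
    rw [filter_image]
    simp [filter_eq]
  have hdisjoint : Disjoint ({{i}} : Finset (Finset (Fin d))) (I.filter fun S => i ∈ S) := by
    simpa using fun h => by simpa using hI _ h
  rw [filter_union, hsingletons, sum_union hdisjoint, sum_singleton, card_singleton, Nat.cast_one,
    div_one]

theorem polyshap_consistency_general
    (d : ℕ)
    (ν : Finset (Fin d) → ℝ) (hν0 : ν ∅ = 0)
    (I : Finset (Finset (Fin d))) (hI : ∀ T ∈ I, 2 ≤ T.card)
    (idx : Finset (Finset (Fin d)))
    (hidx : idx = (Finset.univ : Finset (Fin d)).image (fun i => ({i} : Finset (Fin d))) ∪ I)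
    (φ : Finset (Fin d) → ℝ)
    (hconstr : ∑ T ∈ idx, φ T = ν Finset.univ)
    (hmin : ∀ ψ : Finset (Fin d) → ℝ, (∑ T ∈ idx, ψ T = ν Finset.univ) →
      (∑ S : Finset (Fin d), shapleyWeight d S *
          (ν S - ∑ T ∈ idx.filter (fun T => T ⊆ S), φ T) ^ 2) ≤
        (∑ S : Finset (Fin d), shapleyWeight d S *
          (ν S - ∑ T ∈ idx.filter (fun T => T ⊆ S), ψ T) ^ 2)) :
    ∀ i : Fin d,
      shapley d ν i = φ {i} + ∑ S ∈ I.filter (fun S => i ∈ S), φ S / (S.card : ℝ) := by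
  intro i
  have hsingleton : ∀ j : Fin d, {j} ∈ idx := fun j => by simp [hidx]
  have hne : ∀ T ∈ idx, T.Nonempty := by
    simp only [hidx, mem_union, mem_image]
    rintro T (⟨j, -, rfl⟩ | hT)
    exacts [singleton_nonempty j, card_pos.1 (by linarith [hI T hT])]
  have hresidual : shapley d (ν - surrogateGame idx φ) i = 0 := by
    refine shapley_eq_zero_of_orthogonal _ (by simp [hν0, surrogateGame_empty idx hne])
      (by simp [surrogateGame_univ, hconstr]) (fun j k => ?_) i
    have horth := sum_mul_residual_mul_surrogateGame_eq_zero idx (shapleyWeight d) ν hconstr hmin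
      (δ := Pi.single {j} 1 - Pi.single {k} 1)
      (by simp [sum_sub_distrib, sum_pi_single', hsingleton])
    simpa [surrogateGame_sub, surrogateGame_pi_single idx (hsingleton _)] using horth
  rw [shapley_sub, sub_eq_zero, shapley_surrogateGame idx φ hne] at hresidual
  rw [hresidual, hidx, sum_filter_mem_image_singleton_union_div_card hI]

/-- PolySHAP consistency: the Shapley values of `ν` are recovered from any minimizer of the
PolySHAP objective over the index set `D ∪ I` subject to the efficiency constraint. -/
theorem polyshap_consistency
    (d : ℕ) (hd : 2 ≤ d)
    (ν : Finset (Fin d) → ℝ) (hν0 : ν ∅ = 0)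
    (I : Finset (Finset (Fin d))) (hI : ∀ T ∈ I, 2 ≤ T.card)
    (idx : Finset (Finset (Fin d)))
    (hidx : idx = (Finset.univ : Finset (Fin d)).image (fun i => ({i} : Finset (Fin d))) ∪ I)
    (φ : Finset (Fin d) → ℝ)
    (hconstr : ∑ T ∈ idx, φ T = ν Finset.univ)
    (hmin : ∀ ψ : Finset (Fin d) → ℝ, (∑ T ∈ idx, ψ T = ν Finset.univ) →
      (∑ S : Finset (Fin d), shapleyWeight d S *
          (ν S - ∑ T ∈ idx.filter (fun T => T ⊆ S), φ T) ^ 2) ≤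
        (∑ S : Finset (Fin d), shapleyWeight d S *
          (ν S - ∑ T ∈ idx.filter (fun T => T ⊆ S), ψ T) ^ 2)) :
    ∀ i : Fin d,
      shapley d ν i = φ {i} + ∑ S ∈ I.filter (fun S => i ∈ S), φ S / (S.card : ℝ) :=
  polyshap_consistency_general d ν hν0 I hI idx hidx φ hconstr hmin
end

section
/- Let d ≥ 2 and let ν : 2^D → ℝ be a cooperative game on D = {1,…,d}. Given a paired weighted sample (S_1,w_1),…,(S_{2r},w_{2r}), let X̃_1 ∈ ℝ^{2r×d} and X̃_{≤2} ∈ ℝ^{2r×d_2} be the associated design matrices and ỹ ∈ ℝ^{2r} the target vector, and assume X̃_{≤2} has full column rank. Let φ̂¹ be the unique minimizer of ‖X̃_1 φ − ỹ‖₂² over {φ ∈ ℝ^d : ⟨φ,𝟙⟩ = ν(D)} and let φ̂² be the unique minimizer of ‖X̃_{≤2} φ − ỹ‖₂² over {φ ∈ ℝ^{d_2} : ⟨φ,𝟙⟩ = ν(D)}. Then φ̂¹ = M_{2→1} φ̂², i.e., the Shapley value estimates produced by paired KernelSHAP are exactly those extracted from paired 2-PolySHAP. -/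
open Finset Matrix

/-- Design matrix `X̃_{≤2}` of a weighted sample: rows indexed by samples `Fin r × Bool`,
columns indexed by nonempty subsets of size at most 2, entries `√(w_ℓ)·1[T ⊆ S_ℓ]`. -/
noncomputable def X2mat (d r : ℕ) (S : Fin r × Bool → Finset (Fin d))
    (w : Fin r × Bool → ℝ) :
    Matrix (Fin r × Bool) {T : Finset (Fin d) // T.Nonempty ∧ T.card ≤ 2} ℝ :=
  fun ℓ T => Real.sqrt (w ℓ) * (if (T : Finset (Fin d)) ⊆ S ℓ then 1 else 0)

/-- Design matrix `X̃_1` of a weighted sample: columns indexed by players,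
entries `√(w_ℓ)·1[i ∈ S_ℓ]`. -/
noncomputable def X1mat (d r : ℕ) (S : Fin r × Bool → Finset (Fin d))
    (w : Fin r × Bool → ℝ) :
    Matrix (Fin r × Bool) (Fin d) ℝ :=
  fun ℓ i => Real.sqrt (w ℓ) * (if i ∈ S ℓ then 1 else 0)

/-- Target vector `ỹ` with entries `√(w_ℓ)·ν(S_ℓ)`. -/
noncomputable def yvec (d r : ℕ) (ν : Finset (Fin d) → ℝ)
    (S : Fin r × Bool → Finset (Fin d)) (w : Fin r × Bool → ℝ) :
    Fin r × Bool → ℝ :=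
  fun ℓ => Real.sqrt (w ℓ) * ν (S ℓ)

/-- The matrix `M_{2→1}` mapping a 2-PolySHAP representation to Shapley values,
with entries `1[i ∈ T]/|T|`. -/
noncomputable def M21 (d : ℕ) :
    Matrix (Fin d) {T : Finset (Fin d) // T.Nonempty ∧ T.card ≤ 2} ℝ :=
  fun i T => (if i ∈ (T : Finset (Fin d)) then 1 else 0) / ((T : Finset (Fin d)).card : ℝ)

/-! Both estimators are characterised by their normal equations on the hyperplane `∑ φ = ν(D)`.
The columns of `X̃_1` are the singleton columns of `X̃_{≤2}`, so `X̃_1` inherits full column rank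
and the normal equations of `X̃_1` have at most one solution. The residual of `M_{2→1} φ̂²` for
`X̃_1` is that of `φ̂²` for `X̃_{≤2}` plus `(X̃_1 M_{2→1} - X̃_{≤2}) φ̂²`. When `∑ η = 0`, the first
part is orthogonal to `X̃_1 η`, since `X̃_1 η = X̃_{≤2} η'` for the extension `η'` of `η` by zero
from the singletons. The second part takes the same value on both rows of a pair, because for
`1 ≤ |T| ≤ 2` the quantity `|T ∩ S|/|T| - 1[T ⊆ S]` is invariant under `S ↦ D ∖ S`, while `X̃_1 η`
changes sign between the two rows. Hence `M_{2→1} φ̂²` solves the normal equations of `X̃_1`. -/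

section ConstrainedLeastSquares

variable {m n : Type*} [Fintype m] [Fintype n]

def ConstrainedNormalEq (X : Matrix m n ℝ) (y : m → ℝ) (φ : n → ℝ) : Prop :=
  ∀ η : n → ℝ, ∑ i, η i = 0 → (X *ᵥ φ - y) ⬝ᵥ (X *ᵥ η) = 0

theorem sum_sub_sq_eq_dotProduct (u y : m → ℝ) :
    ∑ ℓ, (u ℓ - y ℓ) ^ 2 = (u - y) ⬝ᵥ (u - y) := by
  simp [dotProduct, sq]

theorem constrainedNormalEq_of_isMin {X : Matrix m n ℝ} {y : m → ℝ} {c : ℝ} {φ : n → ℝ}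
    (hc : ∑ i, φ i = c)
    (hmin : ∀ ψ : n → ℝ, ∑ i, ψ i = c →
      ∑ ℓ, ((X *ᵥ φ) ℓ - y ℓ) ^ 2 ≤ ∑ ℓ, ((X *ᵥ ψ) ℓ - y ℓ) ^ 2) :
    ConstrainedNormalEq X y φ := by
  intro η hη
  set e := X *ᵥ φ - y with he
  set u := X *ᵥ η with hu
  have hquad : ∀ t : ℝ, 0 ≤ (u ⬝ᵥ u) * (t * t) + 2 * (e ⬝ᵥ u) * t + 0 := by
    intro t
    have hsum : ∑ i, (φ + t • η) i = c := by
      simp [Finset.sum_add_distrib, ← Finset.mul_sum, hη, hc]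
    have hres : X *ᵥ (φ + t • η) - y = e + t • u := by
      rw [he, hu, mulVec_add, mulVec_smul]; abel
    have h := hmin _ hsum
    rw [sum_sub_sq_eq_dotProduct, sum_sub_sq_eq_dotProduct, hres] at h
    simp only [add_dotProduct, dotProduct_add, smul_dotProduct, dotProduct_smul, smul_eq_mul,
      dotProduct_comm u e] at h
    linarith
  have hdisc := discrim_le_zero hquad
  rw [discrim, mul_zero, sub_zero] at hdisc
  simpa using le_antisymm hdisc (sq_nonneg _)

theorem mulVec_eq_of_constrainedNormalEq {X : Matrix m n ℝ} {y : m → ℝ} {φ φ' : n → ℝ}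
    (hsum : ∑ i, φ i = ∑ i, φ' i) (h : ConstrainedNormalEq X y φ)
    (h' : ConstrainedNormalEq X y φ') : X *ᵥ φ = X *ᵥ φ' := by
  have hv : ∑ i, (φ - φ') i = 0 := by simp [Finset.sum_sub_distrib, hsum]
  have hself : X *ᵥ (φ - φ') ⬝ᵥ X *ᵥ (φ - φ') = 0 :=
    calc _ = (X *ᵥ φ - y) ⬝ᵥ X *ᵥ (φ - φ') - (X *ᵥ φ' - y) ⬝ᵥ X *ᵥ (φ - φ') := by
          rw [← sub_dotProduct, mulVec_sub]; congr 1; abel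
      _ = 0 := by rw [h _ hv, h' _ hv, sub_self]
  rw [← sub_eq_zero, ← mulVec_sub]
  exact dotProduct_self_eq_zero.mp hself

end ConstrainedLeastSquares

section ExtendByZero

variable {ι κ m R : Type*} [Fintype ι] [Fintype κ] {f : ι → κ}

theorem Function.Injective.sum_extend_zero [AddCommMonoid R] (hf : f.Injective) (v : ι → R) :
    ∑ k, Function.extend f v 0 k = ∑ i, v i := by
  refine (Finset.sum_of_injOn f hf.injOn (fun _ _ => mem_coe.2 (mem_univ _)) ?_ ?_).symm
  · intro k _ hk
    exact Function.extend_apply' _ _ _ fun ⟨i, hi⟩ => hk ⟨i, by simp, hi⟩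
  · intro i _
    rw [hf.extend_apply]

theorem Function.Injective.mulVec_extend_zero [NonUnitalNonAssocSemiring R] (hf : f.Injective)
    (X : Matrix m κ R) (v : ι → R) :
    X *ᵥ Function.extend f v 0 = X.submatrix id f *ᵥ v := by
  ext ℓ
  refine (Finset.sum_of_injOn f hf.injOn (fun _ _ => mem_coe.2 (mem_univ _)) ?_ ?_).symm
  · intro k _ hk
    rw [Function.extend_apply' _ _ _ fun ⟨i, hi⟩ => hk ⟨i, by simp, hi⟩, Pi.zero_apply,
      mul_zero]
  · intro i _
    rw [hf.extend_apply]
    rfl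

end ExtendByZero

theorem sum_prod_bool_mul_eq_zero {ι R : Type*} [Fintype ι] [NonUnitalNonAssocRing R]
    {u v : ι × Bool → R} (hu : ∀ j, u (j, true) = u (j, false))
    (hv : ∀ j, v (j, true) = -v (j, false)) :
    ∑ p, u p * v p = 0 := by
  simp [Fintype.sum_prod_type, hu, hv]

theorem card_inter_div_sub_ite_subset_compl_eq {α : Type*} [Fintype α] [DecidableEq α]
    {T : Finset α} (hT : T.Nonempty) (hT2 : #T ≤ 2) (A : Finset α) :
    (#((univ \ A) ∩ T) : ℝ) / #T - (if T ⊆ univ \ A then 1 else 0)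
      = (#(A ∩ T) : ℝ) / #T - (if T ⊆ A then 1 else 0) := by
  have hcompl : (univ \ A) ∩ T = T \ A := by ext; simp [and_comm]
  have hcard : #(A ∩ T) + #(T \ A) = #T := by
    rw [inter_comm]
    exact card_inter_add_card_sdiff T A
  have hdisj : T ⊆ univ \ A ↔ #(A ∩ T) = 0 := by
    simp [subset_sdiff, disjoint_iff_inter_eq_empty, inter_comm]
  have hsub : T ⊆ A ↔ #(A ∩ T) = #T := by
    rw [← inter_eq_right]
    exact ⟨fun h => by rw [h], fun h => eq_of_subset_of_card_le inter_subset_right h.ge⟩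
  have hpos : 0 < #T := card_pos.mpr hT
  rw [hcompl]
  simp only [hdisj, hsub]
  generalize #(A ∩ T) = k at hcard ⊢
  generalize #T = n at hcard hpos hT2 ⊢
  rw [show #(T \ A) = n - k by omega]
  have hkn : k ≤ n := by omega
  interval_cases n <;> interval_cases k <;> norm_num

abbrev SmallCoalition (d : ℕ) := {T : Finset (Fin d) // T.Nonempty ∧ T.card ≤ 2}

namespace SmallCoalition

def single {d : ℕ} (i : Fin d) : SmallCoalition d := ⟨{i}, singleton_nonempty i, by simp⟩

theorem single_injective {d : ℕ} : Function.Injective (single (d := d)) := fun i j h => by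
  simpa [single] using congrArg Subtype.val h

end SmallCoalition

open SmallCoalition

theorem sum_M21_mulVec {d : ℕ} (φ : SmallCoalition d → ℝ) :
    ∑ i, (M21 d *ᵥ φ) i = ∑ T, φ T := by
  simp only [mulVec, dotProduct]
  rw [Finset.sum_comm]
  refine Finset.sum_congr rfl fun T _ => ?_
  have hT : (#(T : Finset (Fin d)) : ℝ) ≠ 0 := by exact_mod_cast (card_pos.mpr T.2.1).ne'
  simp [M21, ← Finset.sum_mul, ← Finset.sum_div, hT]

section PairedSample

variable {d r : ℕ} {S : Fin r × Bool → Finset (Fin d)} {w : Fin r × Bool → ℝ}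

theorem X1mat_eq_submatrix : X1mat d r S w = (X2mat d r S w).submatrix id single := by
  ext ℓ i
  simp [X1mat, X2mat, SmallCoalition.single]

theorem X1mat_mulVec_injective (hrank : LinearIndependent ℝ (X2mat d r S w).transpose) :
    Function.Injective (X1mat d r S w).mulVec := by
  rw [mulVec_injective_iff, X1mat_eq_submatrix]
  exact hrank.comp _ single_injective

theorem X1mat_mul_M21_apply (ℓ : Fin r × Bool) (T : SmallCoalition d) :
    (X1mat d r S w * M21 d) ℓ T = √(w ℓ) * (#(S ℓ ∩ T) / #(T : Finset (Fin d))) := by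
  simp [mul_apply, X1mat, M21, ← Finset.mul_sum, ← Finset.sum_div]

variable (hpairS : ∀ j : Fin r, S (j, true) = (univ : Finset (Fin d)) \ S (j, false))
  (hpairw : ∀ j : Fin r, w (j, true) = w (j, false))
include hpairS hpairw

theorem X1mat_mul_M21_sub_X2mat_row_pair_eq (j : Fin r) :
    (X1mat d r S w * M21 d - X2mat d r S w) (j, true) =
      (X1mat d r S w * M21 d - X2mat d r S w) (j, false) := by
  ext T
  simp only [Matrix.sub_apply, X1mat_mul_M21_apply, X2mat, hpairS, hpairw, ← mul_sub]
  rw [card_inter_div_sub_ite_subset_compl_eq T.2.1 T.2.2]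

theorem X1mat_mulVec_pair_eq_neg {η : Fin d → ℝ} (hη : ∑ i, η i = 0) (j : Fin r) :
    (X1mat d r S w *ᵥ η) (j, true) = -(X1mat d r S w *ᵥ η) (j, false) := by
  rw [eq_neg_iff_add_eq_zero]
  simp only [mulVec, dotProduct, X1mat, hpairS, hpairw, ← Finset.sum_add_distrib]
  calc _ = ∑ i, √(w (j, false)) * η i := by
        refine Finset.sum_congr rfl fun i _ => ?_
        by_cases hi : i ∈ S (j, false) <;> simp [hi]
    _ = 0 := by rw [← Finset.mul_sum, hη, mul_zero]

theorem constrainedNormalEq_X1mat_M21_mulVec {y : Fin r × Bool → ℝ} {φ : SmallCoalition d → ℝ}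
    (h : ConstrainedNormalEq (X2mat d r S w) y φ) :
    ConstrainedNormalEq (X1mat d r S w) y (M21 d *ᵥ φ) := by
  intro η hη
  have hext : X1mat d r S w *ᵥ η = X2mat d r S w *ᵥ Function.extend single η 0 := by
    rw [single_injective.mulVec_extend_zero, X1mat_eq_submatrix]
  calc (X1mat d r S w *ᵥ (M21 d *ᵥ φ) - y) ⬝ᵥ X1mat d r S w *ᵥ η
      = (X2mat d r S w *ᵥ φ - y) ⬝ᵥ X2mat d r S w *ᵥ Function.extend single η 0 +
          ((X1mat d r S w * M21 d - X2mat d r S w) *ᵥ φ) ⬝ᵥ X1mat d r S w *ᵥ η := by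
        rw [← hext, ← add_dotProduct, mulVec_mulVec, sub_mulVec]
        congr 1
        abel
    _ = 0 := by
        rw [h _ (by rw [single_injective.sum_extend_zero, hη]), zero_add]
        refine sum_prod_bool_mul_eq_zero (fun j => ?_)
          (X1mat_mulVec_pair_eq_neg hpairS hpairw hη)
        exact congrArg (· ⬝ᵥ φ) (X1mat_mul_M21_sub_X2mat_row_pair_eq hpairS hpairw j)

end PairedSample

theorem paired_kernelshap_eq_paired_two_polyshap_general
    (d r : ℕ) (ν : Finset (Fin d) → ℝ)
    (S : Fin r × Bool → Finset (Fin d)) (w : Fin r × Bool → ℝ)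
    (hpairS : ∀ j : Fin r, S (j, true) = (Finset.univ : Finset (Fin d)) \ S (j, false))
    (hpairw : ∀ j : Fin r, w (j, true) = w (j, false))
    (hrank : LinearIndependent ℝ (X2mat d r S w).transpose)
    (φ1 : Fin d → ℝ) (hφ1c : ∑ i, φ1 i = ν Finset.univ)
    (hφ1 : ∀ ψ : Fin d → ℝ, (∑ i, ψ i = ν Finset.univ) →
      ∑ ℓ, ((X1mat d r S w).mulVec φ1 ℓ - yvec d r ν S w ℓ) ^ 2 ≤
        ∑ ℓ, ((X1mat d r S w).mulVec ψ ℓ - yvec d r ν S w ℓ) ^ 2)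
    (φ2 : {T : Finset (Fin d) // T.Nonempty ∧ T.card ≤ 2} → ℝ)
    (hφ2c : ∑ T, φ2 T = ν Finset.univ)
    (hφ2 : ∀ ψ : {T : Finset (Fin d) // T.Nonempty ∧ T.card ≤ 2} → ℝ,
      (∑ T, ψ T = ν Finset.univ) →
      ∑ ℓ, ((X2mat d r S w).mulVec φ2 ℓ - yvec d r ν S w ℓ) ^ 2 ≤
        ∑ ℓ, ((X2mat d r S w).mulVec ψ ℓ - yvec d r ν S w ℓ) ^ 2) :
    φ1 = (M21 d).mulVec φ2 := by
  have h1 := constrainedNormalEq_of_isMin hφ1c hφ1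
  have h2 := constrainedNormalEq_X1mat_M21_mulVec hpairS hpairw
    (constrainedNormalEq_of_isMin hφ2c hφ2)
  have hsum : ∑ i, φ1 i = ∑ i, (M21 d *ᵥ φ2) i := by rw [sum_M21_mulVec, hφ1c, hφ2c]
  exact X1mat_mulVec_injective hrank (mulVec_eq_of_constrainedNormalEq hsum h1 h2)

/-- Paired KernelSHAP is paired 2-PolySHAP: with a paired weighted sample and `X̃_{≤2}` of full
column rank, the constrained least-squares solution for `X̃_1` equals `M_{2→1}` applied to the
constrained least-squares solution for `X̃_{≤2}`. -/
theorem paired_kernelshap_eq_paired_two_polyshap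
    (d r : ℕ) (hd : 2 ≤ d) (ν : Finset (Fin d) → ℝ)
    (S : Fin r × Bool → Finset (Fin d)) (w : Fin r × Bool → ℝ)
    (hw : ∀ ℓ, 0 < w ℓ)
    (hpairS : ∀ j : Fin r, S (j, true) = (Finset.univ : Finset (Fin d)) \ S (j, false))
    (hpairw : ∀ j : Fin r, w (j, true) = w (j, false))
    (hrank : LinearIndependent ℝ (X2mat d r S w).transpose)
    (φ1 : Fin d → ℝ) (hφ1c : ∑ i, φ1 i = ν Finset.univ)
    (hφ1 : ∀ ψ : Fin d → ℝ, (∑ i, ψ i = ν Finset.univ) →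
      ∑ ℓ, ((X1mat d r S w).mulVec φ1 ℓ - yvec d r ν S w ℓ) ^ 2 ≤
        ∑ ℓ, ((X1mat d r S w).mulVec ψ ℓ - yvec d r ν S w ℓ) ^ 2)
    (φ2 : {T : Finset (Fin d) // T.Nonempty ∧ T.card ≤ 2} → ℝ)
    (hφ2c : ∑ T, φ2 T = ν Finset.univ)
    (hφ2 : ∀ ψ : {T : Finset (Fin d) // T.Nonempty ∧ T.card ≤ 2} → ℝ,
      (∑ T, ψ T = ν Finset.univ) →
      ∑ ℓ, ((X2mat d r S w).mulVec φ2 ℓ - yvec d r ν S w ℓ) ^ 2 ≤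
        ∑ ℓ, ((X2mat d r S w).mulVec ψ ℓ - yvec d r ν S w ℓ) ^ 2) :
    φ1 = (M21 d).mulVec φ2 :=
  paired_kernelshap_eq_paired_two_polyshap_general d r ν S w hpairS hpairw hrank φ1 hφ1c hφ1 φ2 hφ2c
    hφ2
end

section
/- (Projection Lemma) Let n ≥ d₊ > d ≥ 1, let X ∈ ℝ^{n×d} have full column rank, let X₊ ∈ ℝ^{n×d₊} be any matrix whose first d columns equal X, let y ∈ ℝ^n and c ∈ ℝ. Suppose β₊* ∈ ℝ^{d₊} minimizes ‖X₊ β − y‖₂² over the affine set {β ∈ ℝ^{d₊} : ⟨β,𝟙⟩ = c}. Then a vector β ∈ ℝ^d with ⟨β,𝟙⟩ = c minimizes ‖X β − y‖₂² over {β ∈ ℝ^d : ⟨β,𝟙⟩ = c} if and only if it minimizes ‖X β − X₊ β₊*‖₂² over the same affine set; in particular the unique constrained minimizers of the two problems coincide. -/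
/-!
At a minimizer `β₊*` of a least-squares problem over an affine set the residual `X₊β₊* − y`
is orthogonal to `X₊v` for every direction `v` of that set. Padding `β` with zeros turns
`Xβ` into `X₊β'` with `⟨β',𝟙⟩ = ⟨β,𝟙⟩`, so for every feasible `β`
`‖Xβ − y‖² = ‖Xβ − X₊β₊*‖² + ‖X₊β₊* − y‖²` (Pythagoras), and the two objectives differ by a
constant on the feasible set.
-/

open Matrix

open Function in
theorem Fintype.sum_extend_zero {ι κ M : Type*} [Fintype ι] [Fintype κ] [AddCommMonoid M]
    {e : ι → κ} (he : Injective e) (v : ι → M) : ∑ k, extend e v 0 k = ∑ i, v i := by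
  classical
  rw [← Finset.sum_subset (Finset.subset_univ (Finset.univ.image e)), Finset.sum_image he.injOn]
  · simp only [he.extend_apply]
  · intro k _ hk
    rw [extend_apply' _ _ _ (by simpa using hk), Pi.zero_apply]

open Function in
theorem Matrix.mulVec_extend_zero {m ι κ R : Type*} [Fintype ι] [Fintype κ] [CommSemiring R]
    {e : ι → κ} (he : Injective e) (M : Matrix m κ R) (v : ι → R) :
    M *ᵥ extend e v 0 = M.submatrix id e *ᵥ v := by
  ext i
  simp only [mulVec, dotProduct, submatrix_apply, id]
  rw [← Fintype.sum_extend_zero he]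
  congr 1
  ext k
  by_cases hk : ∃ a, e a = k
  · obtain ⟨a, rfl⟩ := hk
    simp only [he.extend_apply]
  · simp only [extend_apply' _ _ _ hk, Pi.zero_apply, mul_zero]

theorem EuclideanSpace.norm_toLp_sub_toLp_sq {ι : Type*} [Fintype ι] (a b : ι → ℝ) :
    ‖WithLp.toLp 2 a - WithLp.toLp 2 b‖ ^ 2 = ∑ i, (a i - b i) ^ 2 := by
  rw [EuclideanSpace.real_norm_sq_eq]
  rfl

section LeastSquares

variable {V W E : Type*} [AddCommGroup V] [Module ℝ V] [AddCommGroup W] [Module ℝ W]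
  [NormedAddCommGroup E] [InnerProductSpace ℝ E]

theorem inner_eq_zero_of_forall_norm_sq_le_norm_add_smul_sq {r w : E}
    (h : ∀ t : ℝ, ‖r‖ ^ 2 ≤ ‖r + t • w‖ ^ 2) : inner ℝ r w = 0 := by
  have hdiscr : discrim (‖w‖ ^ 2) (2 * inner ℝ r w) 0 ≤ 0 := by
    refine discrim_le_zero fun t => ?_
    have := h t
    rw [norm_add_sq_real, inner_smul_right, norm_smul, mul_pow, Real.norm_eq_abs, sq_abs] at this
    linarith
  rw [discrim] at hdiscr
  nlinarith [sq_nonneg (inner ℝ r w)]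

/-- The residual `f p - y` is orthogonal to `f x - f p`, since moving `p` towards `x` cannot
decrease the objective. -/
theorem norm_sub_sq_eq_add_of_isMinOn_fiber (f : V →ₗ[ℝ] E) (g : V →ₗ[ℝ] W) {c : W} {y : E}
    {p : V} (hmin : IsMinOn (fun x => ‖f x - y‖ ^ 2) {x | g x = c} p) (hp : g p = c)
    {x : V} (hx : g x = c) : ‖f x - y‖ ^ 2 = ‖f x - f p‖ ^ 2 + ‖f p - y‖ ^ 2 := by
  have hline : ∀ t : ℝ, ‖f p - y‖ ^ 2 ≤ ‖(f p - y) + t • (f x - f p)‖ ^ 2 := by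
    intro t
    have hmem : g (p + t • (x - p)) = c := by
      rw [map_add, map_smul, map_sub, hp, hx, sub_self, smul_zero, add_zero]
    calc ‖f p - y‖ ^ 2 ≤ ‖f (p + t • (x - p)) - y‖ ^ 2 := isMinOn_iff.mp hmin _ hmem
      _ = ‖(f p - y) + t • (f x - f p)‖ ^ 2 := by
        rw [map_add, map_smul, map_sub, add_sub_right_comm]
  have horth := inner_eq_zero_of_forall_norm_sq_le_norm_add_smul_sq hline
  rw [← sub_add_sub_cancel (f x) (f p) y, norm_add_sq_real, real_inner_comm, horth]
  ring

end LeastSquares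

theorem projection_lemma_general
    (n dp d : ℕ) (hddp : d < dp)
    (X : Matrix (Fin n) (Fin d) ℝ)
    (Xp : Matrix (Fin n) (Fin dp) ℝ)
    (hXp : ∀ (i : Fin n) (j : Fin d), Xp i (Fin.castLE (le_of_lt hddp) j) = X i j)
    (y : Fin n → ℝ) (c : ℝ)
    (βp : Fin dp → ℝ) (hβpc : ∑ j, βp j = c)
    (hβp : ∀ γ : Fin dp → ℝ, (∑ j, γ j = c) →
      ∑ i, (Xp.mulVec βp i - y i) ^ 2 ≤ ∑ i, (Xp.mulVec γ i - y i) ^ 2) :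
    ∀ β : Fin d → ℝ, (∑ j, β j = c) →
      ((∀ γ : Fin d → ℝ, (∑ j, γ j = c) →
          ∑ i, (X.mulVec β i - y i) ^ 2 ≤ ∑ i, (X.mulVec γ i - y i) ^ 2) ↔
        (∀ γ : Fin d → ℝ, (∑ j, γ j = c) →
          ∑ i, (X.mulVec β i - Xp.mulVec βp i) ^ 2 ≤
            ∑ i, (X.mulVec γ i - Xp.mulVec βp i) ^ 2)) := by
  have hι := Fin.castLE_injective hddp.le
  have hX : X = Xp.submatrix id (Fin.castLE hddp.le) := by
    ext i j
    exact (hXp i j).symm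
  let f : (Fin dp → ℝ) →ₗ[ℝ] EuclideanSpace ℝ (Fin n) :=
    (WithLp.linearEquiv 2 ℝ (Fin n → ℝ)).symm.toLinearMap ∘ₗ Xp.mulVecLin
  let sum : (Fin dp → ℝ) →ₗ[ℝ] ℝ := Fintype.linearCombination ℝ fun _ => 1
  have hsum (v : Fin dp → ℝ) : sum v = ∑ j, v j := by
    simp [sum, Fintype.linearCombination_apply]
  have hmin : IsMinOn (fun v => ‖f v - WithLp.toLp 2 y‖ ^ 2) {v | sum v = c} βp := by
    refine isMinOn_iff.mpr fun v hv => ?_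
    simpa [f, EuclideanSpace.norm_toLp_sub_toLp_sq] using hβp v ((hsum v).symm.trans hv)
  have hpythag (γ : Fin d → ℝ) (hγ : ∑ j, γ j = c) :
      ∑ i, ((X *ᵥ γ) i - y i) ^ 2 =
        ∑ i, ((X *ᵥ γ) i - (Xp *ᵥ βp) i) ^ 2 + ∑ i, ((Xp *ᵥ βp) i - y i) ^ 2 := by
    have hext : sum (Function.extend (Fin.castLE hddp.le) γ 0) = c := by
      rw [hsum, Fintype.sum_extend_zero hι, hγ]
    simpa [f, EuclideanSpace.norm_toLp_sub_toLp_sq, mulVec_extend_zero hι, ← hX] using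
      norm_sub_sq_eq_add_of_isMinOn_fiber f sum hmin ((hsum βp).trans hβpc) hext
  intro β hβ
  constructor <;> intro h γ hγ <;> linarith [h γ hγ, hpythag β hβ, hpythag γ hγ]

/-- Projection Lemma: if `β₊*` minimizes `‖X₊β − y‖²` over the affine set `⟨β,𝟙⟩ = c`,
then a vector `β` with `⟨β,𝟙⟩ = c` minimizes `‖Xβ − y‖²` over that affine set iff it
minimizes `‖Xβ − X₊β₊*‖²` over it. -/
theorem projection_lemma
    (n dp d : ℕ) (hd : 1 ≤ d) (hddp : d < dp) (hdpn : dp ≤ n)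
    (X : Matrix (Fin n) (Fin d) ℝ)
    (hX : LinearIndependent ℝ X.transpose)
    (Xp : Matrix (Fin n) (Fin dp) ℝ)
    (hXp : ∀ (i : Fin n) (j : Fin d), Xp i (Fin.castLE (le_of_lt hddp) j) = X i j)
    (y : Fin n → ℝ) (c : ℝ)
    (βp : Fin dp → ℝ) (hβpc : ∑ j, βp j = c)
    (hβp : ∀ γ : Fin dp → ℝ, (∑ j, γ j = c) →
      ∑ i, (Xp.mulVec βp i - y i) ^ 2 ≤ ∑ i, (Xp.mulVec γ i - y i) ^ 2) :
    ∀ β : Fin d → ℝ, (∑ j, β j = c) →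
      ((∀ γ : Fin d → ℝ, (∑ j, γ j = c) →
          ∑ i, (X.mulVec β i - y i) ^ 2 ≤ ∑ i, (X.mulVec γ i - y i) ^ 2) ↔
        (∀ γ : Fin d → ℝ, (∑ j, γ j = c) →
          ∑ i, (X.mulVec β i - Xp.mulVec βp i) ^ 2 ≤
            ∑ i, (X.mulVec γ i - Xp.mulVec βp i) ^ 2)) :=
  projection_lemma_general n dp d hddp X Xp hXp y c βp hβpc hβp
end

section
/- Let d ≥ 1, 1 ≤ k ≤ d, and c ∈ ℝ. The following two classes of functions on subsets of D = {1,…,d} coincide after centering at the empty set: { S ↦ f(S) − f(∅) : f(S) = Σ_{T ⊆ D, 1 ≤ |T| ≤ k} γ^{|T|}_{|S∩T|}·I_T for some real coefficients (I_T) with Σ_{i ∈ D} I_{{i}} = c } equals { S ↦ Σ_{T ⊆ D, 1 ≤ |T| ≤ k} φ_T·1[T ⊆ S] : (φ_T) real coefficients with Σ_{T ⊆ D, 1 ≤ |T| ≤ k} φ_T = c }. -/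
/-!
Writing `γ^t_r` as a sum over the subsets `U` of an `r`-set gives
`γ^{|T|}_{|S∩T|} - γ^{|T|}_0 = Σ_{∅ ≠ U ⊆ S∩T} B_{|T|-|U|}`, so a centred `k_ADD` game is the game
with Möbius coefficients `φ_U = Σ_{T ⊇ U} B_{|T|-|U|} I_T`. Since `Σ_{ℓ ≤ t} C(t,ℓ) B_{t-ℓ} = B_t + [t = 1]`,
the sum of the `φ_U` collapses to `Σ_i I_{i}`. The map `I ↦ φ` is unitriangular for inclusion, and its
inverse is `I_T = Σ_{W ⊇ T} φ_W / (|W| - |T| + 1)`: this is the Bernoulli recursion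
`Σ_j C(m,j) B_j / (m - j + 1) = [m = 0]`, applied on each interval `[U, W]` of the subset lattice.
Under this inverse `Σ_i I_{i} = Σ_W φ_W`, because every `W` contains exactly `|W|` singletons.
-/

open Finset

/-- `γ^t_r = Σ_{ℓ=0}^r C(r,ℓ)·B_{t−ℓ}`, where `B` are the Bernoulli numbers with `B_1 = −1/2`. -/
noncomputable def gammaCoeff (t r : ℕ) : ℝ :=
  ∑ ℓ ∈ Finset.range (r + 1), (r.choose ℓ : ℝ) * ((bernoulli (t - ℓ) : ℚ) : ℝ)

/-- The `k_ADD` interaction representation `f(S) = Σ_{T ⊆ D, 1 ≤ |T| ≤ k} γ^{|T|}_{|S∩T|}·I_T`. -/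
noncomputable def kaddFun (d k : ℕ) (I : Finset (Fin d) → ℝ) (S : Finset (Fin d)) : ℝ :=
  ∑ T ∈ (Finset.univ : Finset (Fin d)).powerset.filter (fun T => 1 ≤ T.card ∧ T.card ≤ k),
    gammaCoeff T.card (S ∩ T).card * I T

theorem sum_range_succ_choose_mul_bernoulli_sub (t : ℕ) :
    ∑ ℓ ∈ range (t + 1), (t.choose ℓ : ℚ) * bernoulli (t - ℓ)
      = bernoulli t + if t = 1 then 1 else 0 := by
  rw [← sum_range_reflect, sum_congr rfl fun j hj => by
    rw [add_tsub_cancel_right, Nat.sub_sub_self (mem_range_succ_iff.1 hj),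
      Nat.choose_symm (mem_range_succ_iff.1 hj)], sum_range_succ, sum_bernoulli, Nat.choose_self,
    Nat.cast_one, one_mul, add_comm]

theorem sum_powerset_bernoulli_div {α : Type*} [DecidableEq α] (s : Finset α) :
    ∑ V ∈ s.powerset, (bernoulli V.card : ℚ) / ((s.card - V.card : ℕ) + 1)
      = if s = ∅ then 1 else 0 := by
  simp only [← card_eq_zero]
  rw [sum_powerset_apply_card (fun j => (bernoulli j : ℚ) / ((s.card - j : ℕ) + 1)),
    ← bernoulli_spec', Nat.sum_antidiagonal_eq_sum_range_succ_mk]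
  refine sum_congr rfl fun j hj => ?_
  rw [Nat.add_sub_cancel' (mem_range_succ_iff.1 hj), ← Nat.choose_symm (mem_range_succ_iff.1 hj),
    nsmul_eq_mul]
  ring

theorem sum_Icc_bernoulli_div {α : Type*} [DecidableEq α] {U W : Finset α} (h : U ⊆ W) :
    ∑ T ∈ Icc U W, (bernoulli (T.card - U.card) : ℝ) / ((W.card - T.card : ℕ) + 1)
      = if U = W then 1 else 0 := by
  have disj : ∀ V ∈ (W \ U).powerset, Disjoint U V := fun V hV =>
    disjoint_of_subset_right (mem_powerset.1 hV) disjoint_sdiff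
  rw [Icc_eq_image_powerset h, sum_image fun V₁ h₁ V₂ h₂ hV => by
    rw [← union_sdiff_cancel_left (disj V₁ h₁), hV, union_sdiff_cancel_left (disj V₂ h₂)]]
  have hcard : ∀ V ∈ (W \ U).powerset,
      (bernoulli ((U ∪ V).card - U.card) : ℝ) / ((W.card - (U ∪ V).card : ℕ) + 1)
        = ((bernoulli V.card / (((W \ U).card - V.card : ℕ) + 1) : ℚ) : ℝ) := by
    intro V hV
    rw [card_union_of_disjoint (disj V hV), card_sdiff_of_subset h, Nat.add_sub_cancel_left,
      Nat.sub_sub]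
    push_cast
    rfl
  rw [sum_congr rfl hcard, ← Rat.cast_sum, sum_powerset_bernoulli_div]
  have hWU : W ⊆ U ↔ U = W := ⟨h.antisymm, fun hUW => hUW.ge⟩
  simp only [sdiff_eq_empty_iff_subset, hWU]
  split_ifs <;> simp

theorem gammaCoeff_self (t : ℕ) : gammaCoeff t t = bernoulli t + if t = 1 then 1 else 0 := by
  have h := congrArg (Rat.cast : ℚ → ℝ) (sum_range_succ_choose_mul_bernoulli_sub t)
  push_cast [apply_ite (Rat.cast : ℚ → ℝ)] at h
  exact h

theorem gammaCoeff_zero (t : ℕ) : gammaCoeff t 0 = bernoulli t := by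
  simp [gammaCoeff]

theorem gammaCoeff_card {α : Type*} (t : ℕ) (s : Finset α) :
    gammaCoeff t s.card = ∑ U ∈ s.powerset, (bernoulli (t - U.card) : ℝ) := by
  rw [sum_powerset_apply_card (fun m => (bernoulli (t - m) : ℝ)), gammaCoeff]
  simp only [nsmul_eq_mul]

theorem gammaCoeff_card_sub_gammaCoeff_zero {α : Type*} [DecidableEq α] (t : ℕ) (s : Finset α) :
    gammaCoeff t s.card - gammaCoeff t 0
      = ∑ U ∈ s.powerset.erase ∅, (bernoulli (t - U.card) : ℝ) := by
  rw [sum_erase_eq_sub (empty_mem_powerset s), gammaCoeff_card, gammaCoeff_zero, card_empty,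
    Nat.sub_zero]

theorem sum_powerset_erase_empty_bernoulli_card_sub {α : Type*} [DecidableEq α] (T : Finset α) :
    ∑ U ∈ T.powerset.erase ∅, (bernoulli (T.card - U.card) : ℝ) = if T.card = 1 then 1 else 0 := by
  rw [← gammaCoeff_card_sub_gammaCoeff_zero, gammaCoeff_self, gammaCoeff_zero, add_sub_cancel_left]

section Transforms

variable {α : Type*} [Fintype α] {k : ℕ}

def interactionSets (α : Type*) [Fintype α] (k : ℕ) : Finset (Finset α) :=
  univ.powerset.filter fun T => 1 ≤ T.card ∧ T.card ≤ k

@[simp]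
theorem mem_interactionSets {T : Finset α} : T ∈ interactionSets α k ↔ 1 ≤ T.card ∧ T.card ≤ k := by
  simp [interactionSets]

theorem mem_interactionSets_of_subset {U T : Finset α} (hT : T ∈ interactionSets α k)
    (hU : U.Nonempty) (hUT : U ⊆ T) : U ∈ interactionSets α k := by
  rw [mem_interactionSets] at *
  exact ⟨one_le_card.2 hU, (card_le_card hUT).trans hT.2⟩

theorem mem_interactionSets_of_subset_of_subset {U T W : Finset α} (hU : U ∈ interactionSets α k)
    (hW : W ∈ interactionSets α k) (hUT : U ⊆ T) (hTW : T ⊆ W) : T ∈ interactionSets α k := by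
  rw [mem_interactionSets] at *
  exact ⟨hU.1.trans (card_le_card hUT), (card_le_card hTW).trans hW.2⟩

variable [DecidableEq α]

noncomputable def moebiusOfInteraction (k : ℕ) (I : Finset α → ℝ) (U : Finset α) : ℝ :=
  ∑ T ∈ (interactionSets α k).filter (U ⊆ ·), (bernoulli (T.card - U.card) : ℝ) * I T

noncomputable def interactionOfMoebius (k : ℕ) (φ : Finset α → ℝ) (T : Finset α) : ℝ :=
  ∑ W ∈ (interactionSets α k).filter (T ⊆ ·), φ W / ((W.card - T.card : ℕ) + 1)

theorem sum_moebiusOfInteraction (hk : 1 ≤ k) (I : Finset α → ℝ) :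
    ∑ U ∈ interactionSets α k, moebiusOfInteraction k I U = ∑ i, I {i} := by
  unfold moebiusOfInteraction
  rw [sum_comm' (t' := interactionSets α k) (s' := fun T => T.powerset.erase ∅) fun U T => by
    simp only [mem_filter, mem_erase, mem_powerset, ne_eq, ← nonempty_iff_ne_empty]
    constructor
    · rintro ⟨hU, hT, hUT⟩
      exact ⟨⟨one_le_card.1 (mem_interactionSets.1 hU).1, hUT⟩, hT⟩
    · rintro ⟨⟨hU, hUT⟩, hT⟩
      exact ⟨mem_interactionSets_of_subset hT hU hUT, hT, hUT⟩]
  have hsingletons : (interactionSets α k).filter (·.card = 1) = powersetCard 1 univ := by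
    ext T
    simp only [mem_filter, mem_interactionSets, mem_powersetCard_univ]
    omega
  simp_rw [← sum_mul, sum_powerset_erase_empty_bernoulli_card_sub, ite_mul, one_mul, zero_mul]
  rw [← sum_filter, hsingletons, powersetCard_one, sum_map]
  rfl

theorem sum_interactionOfMoebius_singleton (φ : Finset α → ℝ) :
    ∑ i, interactionOfMoebius k φ {i} = ∑ W ∈ interactionSets α k, φ W := by
  unfold interactionOfMoebius
  rw [sum_comm' (t' := interactionSets α k) (s' := fun W => W) fun i W => by
    simp only [mem_univ, mem_filter, singleton_subset_iff, true_and, and_comm]]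
  refine sum_congr rfl fun W hW => ?_
  have hW : 0 < W.card := (mem_interactionSets.1 hW).1
  simp_rw [card_singleton]
  rw [Nat.cast_pred hW, sub_add_cancel, sum_const, nsmul_eq_mul,
    mul_div_cancel₀ _ (by positivity)]

theorem moebiusOfInteraction_interactionOfMoebius (φ : Finset α → ℝ) {U : Finset α}
    (hU : U ∈ interactionSets α k) :
    moebiusOfInteraction k (interactionOfMoebius k φ) U = φ U := by
  unfold moebiusOfInteraction interactionOfMoebius
  simp_rw [mul_sum]
  rw [sum_comm' (t' := (interactionSets α k).filter (U ⊆ ·)) (s' := fun W => Icc U W) fun T W => by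
    simp only [mem_filter, mem_Icc]
    constructor
    · rintro ⟨⟨-, hUT⟩, hW, hTW⟩
      exact ⟨⟨hUT, hTW⟩, hW, hUT.trans hTW⟩
    · rintro ⟨⟨hUT, hTW⟩, hW, -⟩
      exact ⟨⟨mem_interactionSets_of_subset_of_subset hU hW hUT hTW, hUT⟩, hW, hTW⟩]
  have hinner : ∀ W ∈ (interactionSets α k).filter (U ⊆ ·),
      ∑ T ∈ Icc U W, (bernoulli (T.card - U.card) : ℝ) * (φ W / ((W.card - T.card : ℕ) + 1))
        = if U = W then φ W else 0 := fun W hW => by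
    simp_rw [mul_div_left_comm _ (φ W), ← mul_sum]
    rw [sum_Icc_bernoulli_div (mem_filter.1 hW).2, mul_ite, mul_one, mul_zero]
  rw [sum_congr rfl hinner, sum_ite_eq, if_pos (mem_filter.2 ⟨hU, subset_rfl⟩)]

end Transforms

theorem kaddFun_sub_kaddFun_empty (d k : ℕ) (I : Finset (Fin d) → ℝ) (S : Finset (Fin d)) :
    kaddFun d k I S - kaddFun d k I ∅
      = ∑ U ∈ (univ : Finset (Fin d)).powerset.filter
          (fun U => 1 ≤ U.card ∧ U.card ≤ k ∧ U ⊆ S), moebiusOfInteraction k I U := by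
  unfold kaddFun moebiusOfInteraction
  simp_rw [← sum_sub_distrib, empty_inter, card_empty, ← sub_mul,
    gammaCoeff_card_sub_gammaCoeff_zero, sum_mul]
  refine sum_comm' fun T U => ?_
  simp only [mem_filter, mem_powerset, subset_univ, true_and, mem_erase, subset_inter_iff,
    mem_interactionSets, ne_eq, ← nonempty_iff_ne_empty, ← one_le_card]
  constructor
  · rintro ⟨hT, hU, hUS, hUT⟩
    exact ⟨⟨hT, hUT⟩, hU, (card_le_card hUT).trans hT.2, hUS⟩
  · rintro ⟨⟨hT, hUT⟩, hU, -, hUS⟩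
    exact ⟨hT, hU, hUS, hUT⟩

theorem kadd_class_eq_moebius_class_general
    (d k : ℕ) (hk1 : 1 ≤ k) (c : ℝ) :
    {g : Finset (Fin d) → ℝ |
      ∃ I : Finset (Fin d) → ℝ,
        (∑ i : Fin d, I {i}) = c ∧
        g = fun S => kaddFun d k I S - kaddFun d k I ∅} =
    {g : Finset (Fin d) → ℝ |
      ∃ φ : Finset (Fin d) → ℝ,
        (∑ T ∈ (Finset.univ : Finset (Fin d)).powerset.filter
            (fun T => 1 ≤ T.card ∧ T.card ≤ k), φ T) = c ∧
        g = fun S => ∑ T ∈ (Finset.univ : Finset (Fin d)).powerset.filter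
            (fun T => 1 ≤ T.card ∧ T.card ≤ k ∧ T ⊆ S), φ T} := by
  ext g
  constructor
  · rintro ⟨I, rfl, rfl⟩
    exact ⟨moebiusOfInteraction k I, sum_moebiusOfInteraction hk1 I,
      funext (kaddFun_sub_kaddFun_empty d k I)⟩
  · rintro ⟨φ, rfl, rfl⟩
    refine ⟨interactionOfMoebius k φ, sum_interactionOfMoebius_singleton φ, funext fun S => ?_⟩
    rw [kaddFun_sub_kaddFun_empty]
    refine sum_congr rfl fun U hU => (moebiusOfInteraction_interactionOfMoebius φ ?_).symm
    obtain ⟨-, hU1, hUk, -⟩ := mem_filter.1 hU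
    exact mem_interactionSets.2 ⟨hU1, hUk⟩

/-- The class of centered `k_ADD` interaction representations with singleton coefficients summing
to `c` coincides with the class of games whose Möbius coefficients are supported on nonempty sets
of size at most `k` and sum to `c`. -/
theorem kadd_class_eq_moebius_class
    (d k : ℕ) (hd : 1 ≤ d) (hk1 : 1 ≤ k) (hkd : k ≤ d) (c : ℝ) :
    {g : Finset (Fin d) → ℝ |
      ∃ I : Finset (Fin d) → ℝ,
        (∑ i : Fin d, I {i}) = c ∧
        g = fun S => kaddFun d k I S - kaddFun d k I ∅} =
    {g : Finset (Fin d) → ℝ |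
      ∃ φ : Finset (Fin d) → ℝ,
        (∑ T ∈ (Finset.univ : Finset (Fin d)).powerset.filter
            (fun T => 1 ≤ T.card ∧ T.card ≤ k), φ T) = c ∧
        g = fun S => ∑ T ∈ (Finset.univ : Finset (Fin d)).powerset.filter
            (fun T => 1 ≤ T.card ∧ T.card ≤ k ∧ T ⊆ S), φ T} :=
  kadd_class_eq_moebius_class_general d k hk1 c
end

section
/- Let d ≥ 1, let ν : 2^D → ℝ be a cooperative game on D = {1,…,d}, and let 1 ≤ k ≤ d. Then the Shapley interaction index of ν vanishes on all subsets of size greater than k if and only if the Möbius transform of ν vanishes on all subsets of size greater than k; i.e., (∀ S ⊆ D with |S| > k, I_Sh(S) = 0) ⟺ (∀ S ⊆ D with |S| > k, m(S) = 0). -/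
/-!
Write `Δ_S ν(T) = Σ_{L ⊆ S} (−1)^{|S|−|L|} ν(T ∪ L)` for the discrete derivative, so that
`m(S) = Δ_S ν(∅)` and `I_Sh(S)` is a weighted sum of the `Δ_S ν(T)`, `T ⊆ D ∖ S`. Since
`Δ_{S ∪ {a}} = Δ_S(· ∪ {a}) − Δ_S`, induction on `T` gives `Δ_S ν(T) = Σ_{W ⊆ T} m(S ∪ W)`.
Exchanging the sums, the Shapley weights of the supersets of `W` add up to `1/(|W| + 1)`, so
`I_Sh(S) = Σ_{W ⊆ D ∖ S} m(S ∪ W)/(|W| + 1)`. This relation is unitriangular for inclusion: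
if `m` vanishes above size `k` so does `I_Sh`, and conversely by downward induction on `|S|`.
-/

open Finset

/-- Möbius transform `m(S) = Σ_{L ⊆ S} (−1)^{|S|−|L|}·ν(L)`. -/
noncomputable def moebius (d : ℕ) (ν : Finset (Fin d) → ℝ) (S : Finset (Fin d)) : ℝ :=
  ∑ L ∈ S.powerset, (-1 : ℝ) ^ (S.card - L.card) * ν L

/-- Shapley interaction index
`I_Sh(S) = Σ_{T ⊆ D∖S} [1/((d−|S|+1)·C(d−|S|,|T|))]·Σ_{L ⊆ S} (−1)^{|S|−|L|}·ν(T∪L)`. -/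
noncomputable def shapleyInteraction (d : ℕ) (ν : Finset (Fin d) → ℝ)
    (S : Finset (Fin d)) : ℝ :=
  ∑ T ∈ ((Finset.univ : Finset (Fin d)) \ S).powerset,
    (1 / (((d - S.card + 1 : ℕ) : ℝ) * (((d - S.card).choose T.card : ℕ) : ℝ))) *
      ∑ L ∈ S.powerset, (-1 : ℝ) ^ (S.card - L.card) * ν (T ∪ L)

section DiscreteDerivative

variable {α R : Type*} [DecidableEq α] [CommRing R]

def discreteDerivative (ν : Finset α → R) (S T : Finset α) : R :=
  ∑ L ∈ S.powerset, (-1 : R) ^ (#S - #L) * ν (T ∪ L)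

lemma discreteDerivative_insert (ν : Finset α → R) {a : α} {S : Finset α} (ha : a ∉ S)
    (T : Finset α) :
    discreteDerivative ν (insert a S) T =
      discreteDerivative ν S (insert a T) - discreteDerivative ν S T := by
  unfold discreteDerivative
  rw [sum_powerset_insert ha, sub_eq_add_neg, add_comm, ← sum_neg_distrib]
  congr 1
  · refine sum_congr rfl fun L hL => ?_
    have haL : a ∉ L := fun h => ha (mem_powerset.1 hL h)
    rw [card_insert_of_notMem ha, card_insert_of_notMem haL, Nat.add_sub_add_right,
      union_insert, insert_union]
  · refine sum_congr rfl fun L hL => ?_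
    rw [card_insert_of_notMem ha, Nat.sub_add_comm (card_le_card (mem_powerset.1 hL)), pow_succ]
    ring

lemma discreteDerivative_eq_sum_powerset (ν : Finset α → R) {S T : Finset α}
    (hST : Disjoint S T) :
    discreteDerivative ν S T = ∑ W ∈ T.powerset, discreteDerivative ν (S ∪ W) ∅ := by
  induction T using Finset.induction_on generalizing S with
  | empty => simp
  | insert a T haT ih =>
    rw [disjoint_insert_right] at hST
    have h := discreteDerivative_insert ν hST.1 T
    rw [eq_sub_iff_add_eq'] at h
    rw [← h, sum_powerset_insert haT, ih hST.2, ih (disjoint_insert_left.2 ⟨haT, hST.2⟩)]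
    simp only [union_insert, insert_union]

end DiscreteDerivative

section PowersetSums

variable {α M : Type*} [DecidableEq α] [AddCommMonoid M]

lemma sum_powerset_sum_powerset_eq_sum_Icc (A : Finset α) (f : Finset α → Finset α → M) :
    ∑ T ∈ A.powerset, ∑ W ∈ T.powerset, f T W = ∑ W ∈ A.powerset, ∑ T ∈ Icc W A, f T W :=
  sum_comm' fun T W => by
    simp only [mem_powerset, mem_Icc]
    exact ⟨fun h => ⟨⟨h.2, h.1⟩, h.2.trans h.1⟩, fun h => ⟨h.1.2, h.1.1⟩⟩

lemma sum_Icc_apply_card {W A : Finset α} (hWA : W ⊆ A) (g : ℕ → M) :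
    ∑ T ∈ Icc W A, g #T = ∑ u ∈ range (#A - #W + 1), (#A - #W).choose u • g (#W + u) := by
  have hinj : Set.InjOn (W ∪ ·) (A \ W).powerset := fun U hU V hV h => by
    have hU' := disjoint_of_subset_right (mem_powerset.1 hU) disjoint_sdiff
    have hV' := disjoint_of_subset_right (mem_powerset.1 hV) disjoint_sdiff
    simpa [union_sdiff_cancel_left hU', union_sdiff_cancel_left hV'] using
      congrArg (· \ W) h
  rw [Icc_eq_image_powerset hWA, sum_image hinj, ← card_sdiff_of_subset hWA,
    ← sum_powerset_apply_card]
  refine sum_congr rfl fun U hU => ?_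
  rw [card_union_of_disjoint (disjoint_of_subset_right (mem_powerset.1 hU) disjoint_sdiff)]

end PowersetSums

section ShapleyWeights

variable {K : Type*} [Field K] [CharZero K]

lemma sum_range_choose_mul_inv_choose {n w : ℕ} (hw : w ≤ n) :
    ∑ u ∈ range (n - w + 1),
      ((n - w).choose u : K) * (1 / (((n + 1 : ℕ) : K) * (n.choose (w + u) : K))) =
      1 / ((w : K) + 1) := by
  have hterm : ∀ u ∈ range (n - w + 1),
      ((n - w).choose u : K) * (1 / (((n + 1 : ℕ) : K) * (n.choose (w + u) : K))) =
        ((u + w).choose w : K) / (((n + 1 : ℕ) : K) * (n.choose w : K)) := by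
    intro u hu
    have hwu : w + u ≤ n := by rw [mem_range] at hu; omega
    have hmul : (n.choose (w + u) : K) * ((u + w).choose w : K) =
        (n.choose w : K) * ((n - w).choose u : K) := by
      rw [add_comm u w]
      exact_mod_cast (by simpa using Nat.choose_mul (n := n) (Nat.le_add_right w u))
    have hchoose_wu := (Nat.choose_pos hwu).ne'
    have hchoose_w := (Nat.choose_pos hw).ne'
    field_simp
    linear_combination hmul.symm
  have hsum : ∑ u ∈ range (n - w + 1), ((u + w).choose w : K) = ((n + 1).choose (w + 1) : K) := by
    rw [← Nat.cast_sum, Nat.sum_range_add_choose, Nat.sub_add_cancel hw]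
  have hpascal : ((n + 1 : ℕ) : K) * (n.choose w : K) = ((n + 1).choose (w + 1) : K) * (w + 1) := by
    exact_mod_cast Nat.add_one_mul_choose_eq n w
  have hchoose := (Nat.choose_pos (Nat.succ_le_succ hw)).ne'
  rw [sum_congr rfl hterm, ← sum_div, hsum, hpascal]
  field_simp

lemma sum_Icc_shapley_weight {α : Type*} [DecidableEq α] {W A : Finset α} (hWA : W ⊆ A) :
    ∑ T ∈ Icc W A, 1 / (((#A + 1 : ℕ) : K) * ((#A).choose #T : K)) = 1 / ((#W : K) + 1) := by
  rw [sum_Icc_apply_card hWA fun t => 1 / (((#A + 1 : ℕ) : K) * ((#A).choose t : K))]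
  simp only [nsmul_eq_mul]
  exact sum_range_choose_mul_inv_choose (card_le_card hWA)

end ShapleyWeights

lemma moebius_eq_discreteDerivative (d : ℕ) (ν : Finset (Fin d) → ℝ) (S : Finset (Fin d)) :
    moebius d ν S = discreteDerivative ν S ∅ := by
  simp only [moebius, discreteDerivative, empty_union]

lemma shapleyInteraction_eq_sum_moebius (d : ℕ) (ν : Finset (Fin d) → ℝ) (S : Finset (Fin d)) :
    shapleyInteraction d ν S =
      ∑ W ∈ (univ \ S).powerset, moebius d ν (S ∪ W) / (#W + 1) := by
  have hcard : d - #S = #(univ \ S) := by rw [card_univ_sdiff, Fintype.card_fin]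
  calc shapleyInteraction d ν S
      = ∑ T ∈ (univ \ S).powerset, ∑ W ∈ T.powerset,
          1 / (((#(univ \ S) + 1 : ℕ) : ℝ) * ((#(univ \ S)).choose #T : ℝ)) *
            moebius d ν (S ∪ W) := by
        rw [shapleyInteraction, hcard]
        refine sum_congr rfl fun T hT => ?_
        have hST : Disjoint S T := disjoint_of_subset_right (mem_powerset.1 hT) disjoint_sdiff
        simp only [← mul_sum, moebius_eq_discreteDerivative]
        rw [← discreteDerivative_eq_sum_powerset ν hST, discreteDerivative]
    _ = ∑ W ∈ (univ \ S).powerset, ∑ T ∈ Icc W (univ \ S),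
          1 / (((#(univ \ S) + 1 : ℕ) : ℝ) * ((#(univ \ S)).choose #T : ℝ)) *
            moebius d ν (S ∪ W) :=
        sum_powerset_sum_powerset_eq_sum_Icc _ _
    _ = ∑ W ∈ (univ \ S).powerset, moebius d ν (S ∪ W) / (#W + 1) := by
        refine sum_congr rfl fun W hW => ?_
        rw [← sum_mul, sum_Icc_shapley_weight (mem_powerset.1 hW), one_div_mul_eq_div]

theorem shapleyInteraction_vanishes_iff_moebius_vanishes_general
    (d k : ℕ)
    (ν : Finset (Fin d) → ℝ) :
    (∀ S : Finset (Fin d), k < S.card → shapleyInteraction d ν S = 0) ↔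
      (∀ S : Finset (Fin d), k < S.card → moebius d ν S = 0) := by
  constructor
  · intro hI S hS
    refine strongDownwardInductionOn (n := d) (p := fun S => k < #S → moebius d ν S = 0) S
      (fun S ih _ hS => ?_) (by simpa using card_le_univ S) hS
    have hIS := hI S hS
    -- only the term `W = ∅` survives: the others are Möbius coefficients of larger sets
    rw [shapleyInteraction_eq_sum_moebius, sum_eq_single_of_mem ∅ (empty_mem_powerset _)] at hIS
    · simpa using hIS
    intro W hW hW0
    have hWS : Disjoint W S := disjoint_of_subset_left (mem_powerset.1 hW) sdiff_disjoint
    have hSW : S ⊂ S ∪ W := left_lt_sup.2 fun h => hW0 (hWS.eq_bot_of_le h)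
    rw [ih (by simpa using card_le_univ (S ∪ W)) hSW (hS.trans (card_lt_card hSW)), zero_div]
  · intro hm S hS
    rw [shapleyInteraction_eq_sum_moebius]
    refine sum_eq_zero fun W _ => ?_
    rw [hm _ (hS.trans_le (card_le_card subset_union_left)), zero_div]

/-- The Shapley interaction index of `ν` vanishes on all subsets of size greater than `k`
iff the Möbius transform of `ν` vanishes on all subsets of size greater than `k`. -/
theorem shapleyInteraction_vanishes_iff_moebius_vanishes
    (d k : ℕ) (hd : 1 ≤ d) (hk1 : 1 ≤ k) (hkd : k ≤ d)
    (ν : Finset (Fin d) → ℝ) :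
    (∀ S : Finset (Fin d), k < S.card → shapleyInteraction d ν S = 0) ↔
      (∀ S : Finset (Fin d), k < S.card → moebius d ν S = 0) :=
  shapleyInteraction_vanishes_iff_moebius_vanishes_general d k ν
end

section
/- Let d ≥ 1 and let (S_1,w_1),…,(S_{2r},w_{2r}) be a paired weighted sample on D = {1,…,d}. Define u ∈ ℝ^d by u_i = (1/d_2)·Σ_{T ⊆ D, 1 ≤ |T| ≤ 2} [X̃_1ᵀ X̃_{≤2}]_{i,T} − (1/d)·Σ_{j ∈ D} [X̃_1ᵀ X̃_1]_{i,j}. Then for every i ∈ D, u_i = (1/(2d(d+1)))·Σ_{ℓ=1}^{2r} w_ℓ·|S_ℓ|·(|S_ℓ| − d); in particular u is a scalar multiple of the all-ones vector, so P_d u = 0. -/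
open Finset Matrix

/-- `P_p = I − (1/p)·𝟙𝟙ᵀ`, the orthogonal projection off the all-ones vector. -/
noncomputable def projOnes (p : ℕ) : Matrix (Fin p) (Fin p) ℝ :=
  1 - (p : ℝ)⁻¹ • Matrix.of (fun _ _ => (1 : ℝ))

/-!
The entries of `X̃` are `√w_ℓ` times indicators, so the row sums of the two Gram matrices collapse:
`∑_T [X̃₁ᵀX̃_{≤2}]_{iT} = ∑_ℓ w_ℓ 1[i ∈ S_ℓ] C(|S_ℓ| + 1, 2)` and
`∑_j [X̃₁ᵀX̃₁]_{ij} = ∑_ℓ w_ℓ 1[i ∈ S_ℓ] |S_ℓ|`. With `d_2 = C(d + 1, 2)` this gives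
`u_i = ∑_ℓ w_ℓ 1[i ∈ S_ℓ] |S_ℓ|(|S_ℓ| - d) / (d(d + 1))`. The weight `s(s - d)` is invariant under
`s ↦ d - s`, so each complementary pair contributes half its total whichever of its two sets
contains `i`.
-/

theorem Matrix.sum_transpose_mul_apply {ι m n α : Type*} [Fintype ι] [Fintype n]
    [NonUnitalNonAssocSemiring α] (A : Matrix ι m α) (B : Matrix ι n α) (i : m) :
    ∑ k, (Aᵀ * B) i k = ∑ ℓ, A ℓ i * ∑ k, B ℓ k := by
  simp only [mul_apply, transpose_apply, mul_sum]
  exact sum_comm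

theorem Finset.card_filter_nonempty_card_le_two_subset {α : Type*} [Fintype α] [DecidableEq α]
    (A : Finset α) : #{T : Finset α | (T.Nonempty ∧ #T ≤ 2) ∧ T ⊆ A} = (#A + 1).choose 2 := by
  have hsplit : ({T : Finset α | (T.Nonempty ∧ #T ≤ 2) ∧ T ⊆ A} : Finset (Finset α)) =
      A.powersetCard 1 ∪ A.powersetCard 2 := by
    ext T
    simp only [mem_filter, mem_univ, true_and, mem_union, mem_powersetCard, ← card_pos]
    grind
  have hdisj : Disjoint (A.powersetCard 1) (A.powersetCard 2) :=
    disjoint_left.2 fun T h1 h2 => by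
      rw [mem_powersetCard] at h1 h2
      omega
  rw [hsplit, card_union_of_disjoint hdisj, card_powersetCard, card_powersetCard,
    Nat.choose_succ_succ]

section DesignMatrices

variable {d r : ℕ} (S : Fin r × Bool → Finset (Fin d)) (w : Fin r × Bool → ℝ)

theorem sum_X1mat_row (ℓ : Fin r × Bool) :
    ∑ j, X1mat d r S w ℓ j = √(w ℓ) * #(S ℓ) := by
  simp only [X1mat, ← mul_sum, sum_boole, filter_mem_eq_inter, univ_inter]

theorem sum_X2mat_row (ℓ : Fin r × Bool) :
    ∑ T, X2mat d r S w ℓ T = √(w ℓ) * (#(S ℓ) + 1).choose 2 := by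
  simp only [X2mat, ← mul_sum]
  rw [← sum_subtype {T : Finset (Fin d) | T.Nonempty ∧ #T ≤ 2} (by simp)
    (fun T => if T ⊆ S ℓ then (1 : ℝ) else 0), sum_boole, filter_filter,
    card_filter_nonempty_card_le_two_subset]

theorem rowAverage_sub_eq_sum_mul_indicator (hw : ∀ ℓ, 0 ≤ w ℓ) (i : Fin d) :
    (1 / ((d.choose 1 + d.choose 2 : ℕ) : ℝ)) * ∑ T, ((X1mat d r S w)ᵀ * X2mat d r S w) i T -
        (1 / (d : ℝ)) * ∑ j, ((X1mat d r S w)ᵀ * X1mat d r S w) i j =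
      ∑ ℓ, w ℓ * (if i ∈ S ℓ then 1 else 0) * (#(S ℓ) * (#(S ℓ) - d) / (d * (d + 1))) := by
  have hd : (d : ℝ) ≠ 0 := by exact_mod_cast i.pos.ne'
  rw [← Nat.choose_succ_succ]
  simp only [sum_transpose_mul_apply, sum_X1mat_row, sum_X2mat_row, mul_sum, ← sum_sub_distrib]
  refine sum_congr rfl fun ℓ _ => ?_
  conv_rhs => rw [← Real.mul_self_sqrt (hw ℓ)]
  simp only [X1mat, Nat.cast_choose_two]
  push_cast
  simp only [add_sub_cancel_right]
  field_simp
  ring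

end DesignMatrices

/- Within a pair exactly one of `S`, `univ \ S` contains `i`, and `F` agrees on the two. -/
theorem sum_mul_indicator_mul_of_paired {ι α : Type*} [Fintype ι] [Fintype α] [DecidableEq α]
    {S : ι × Bool → Finset α} {w : ι × Bool → ℝ}
    (hpairS : ∀ j, S (j, true) = univ \ S (j, false)) (hpairw : ∀ j, w (j, true) = w (j, false))
    {F : Finset α → ℝ} (hF : ∀ A, F (univ \ A) = F A) (i : α) :
    ∑ ℓ, w ℓ * (if i ∈ S ℓ then 1 else 0) * F (S ℓ) = 1 / 2 * ∑ ℓ, w ℓ * F (S ℓ) := by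
  simp only [Fintype.sum_prod_type, Fintype.sum_bool, hpairS, hpairw, hF, mul_sum]
  refine sum_congr rfl fun j _ => ?_
  by_cases hi : i ∈ S (j, false) <;> simp [hi] <;> ring

theorem projOnes_mulVec_const (p : ℕ) (c : ℝ) : projOnes p *ᵥ (fun _ => c) = 0 := by
  ext i
  have hp : (p : ℝ) ≠ 0 := by exact_mod_cast i.pos.ne'
  simp [projOnes, mulVec, dotProduct, sub_mul, one_apply, sum_sub_distrib, hp]

theorem paired_ones_direction_general
    (d r : ℕ)
    (S : Fin r × Bool → Finset (Fin d)) (w : Fin r × Bool → ℝ)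
    (hw : ∀ ℓ, 0 < w ℓ)
    (hpairS : ∀ j : Fin r, S (j, true) = (Finset.univ : Finset (Fin d)) \ S (j, false))
    (hpairw : ∀ j : Fin r, w (j, true) = w (j, false))
    (u : Fin d → ℝ)
    (hu : ∀ i : Fin d, u i =
      (1 / ((d.choose 1 + d.choose 2 : ℕ) : ℝ)) *
          (∑ T : {T : Finset (Fin d) // T.Nonempty ∧ T.card ≤ 2},
            ((X1mat d r S w).transpose * X2mat d r S w) i T) -
        (1 / (d : ℝ)) * ∑ j : Fin d, ((X1mat d r S w).transpose * X1mat d r S w) i j) :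
    (∀ i : Fin d, u i =
      (1 / (2 * (d : ℝ) * ((d : ℝ) + 1))) *
        ∑ ℓ, w ℓ * ((S ℓ).card : ℝ) * (((S ℓ).card : ℝ) - (d : ℝ))) ∧
      (projOnes d).mulVec u = 0 := by
  have hsymm : ∀ A : Finset (Fin d),
      (#(univ \ A) : ℝ) * (#(univ \ A) - d) / (d * (d + 1)) = #A * (#A - d) / (d * (d + 1)) := by
    intro A
    rw [card_univ_sdiff, Fintype.card_fin, Nat.cast_sub (card_le_univ A |>.trans_eq (by simp))]
    ring
  have hconst : ∀ i : Fin d, u i = (1 / (2 * (d : ℝ) * ((d : ℝ) + 1))) *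
      ∑ ℓ, w ℓ * ((S ℓ).card : ℝ) * (((S ℓ).card : ℝ) - (d : ℝ)) := fun i => by
    rw [hu i, rowAverage_sub_eq_sum_mul_indicator S w (fun ℓ => (hw ℓ).le),
      sum_mul_indicator_mul_of_paired (F := fun A => #A * (#A - d) / (d * (d + 1))) hpairS hpairw
        hsymm, mul_sum, mul_sum]
    exact sum_congr rfl fun ℓ _ => by field_simp
  refine ⟨hconst, ?_⟩
  rw [funext hconst]
  exact projOnes_mulVec_const d _

/-- For a paired weighted sample, the difference between the column-averaged rows of
`X̃₁ᵀX̃_{≤2}` and `X̃₁ᵀX̃₁` is constant in `i`, with the stated closed form; in particular it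
is annihilated by `P_d`. -/
theorem paired_ones_direction
    (d r : ℕ) (hd : 1 ≤ d)
    (S : Fin r × Bool → Finset (Fin d)) (w : Fin r × Bool → ℝ)
    (hw : ∀ ℓ, 0 < w ℓ)
    (hpairS : ∀ j : Fin r, S (j, true) = (Finset.univ : Finset (Fin d)) \ S (j, false))
    (hpairw : ∀ j : Fin r, w (j, true) = w (j, false))
    (u : Fin d → ℝ)
    (hu : ∀ i : Fin d, u i =
      (1 / ((d.choose 1 + d.choose 2 : ℕ) : ℝ)) *
          (∑ T : {T : Finset (Fin d) // T.Nonempty ∧ T.card ≤ 2},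
            ((X1mat d r S w).transpose * X2mat d r S w) i T) -
        (1 / (d : ℝ)) * ∑ j : Fin d, ((X1mat d r S w).transpose * X1mat d r S w) i j) :
    (∀ i : Fin d, u i =
      (1 / (2 * (d : ℝ) * ((d : ℝ) + 1))) *
        ∑ ℓ, w ℓ * ((S ℓ).card : ℝ) * (((S ℓ).card : ℝ) - (d : ℝ))) ∧
      (projOnes d).mulVec u = 0 :=
  paired_ones_direction_general d r S w hw hpairS hpairw u hu
end
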